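/- arXiv:math/0606314 — 3 statements merged into one kernel-verified Lean document; each statement's English description precedes it below -/
import Mathlib

section
/- Let v be a polynomial on ℝ^n. The solution u of the Dirichlet problem Δu = v in the open unit ball with u = 0 on the unit sphere is a polynomial of degree at most deg v + 2. -/
/-!
The map `q ↦ Δ((1 - ‖x‖²) q)` sends polynomials of degree `≤ d` to polynomials of degree `≤ d`.
It is injective: if `Δ((1 - ‖x‖²) q) = 0`, then `(1 - ‖x‖²) q` is harmonic and vanishes on the
unit sphere, so by the weak maximum principle it vanishes on the ball, hence `q = 0` there and
thus as a polynomial. By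
finite dimensionality it is onto, so `v = Δ((1 - ‖x‖²) q)` with `deg q ≤ deg v`, and then
`u - (1 - ‖x‖²) q` is harmonic in the ball and zero on the sphere, hence zero.

The weak maximum principle is proved by perturbing `w` to `w + δ‖x‖²`, whose Laplacian is
positive, so that by the second-derivative test it has no interior maximum.
-/

/-- The Laplacian of a function on `ℝⁿ`: `Δf(x) = Σᵢ ∂²f/∂xᵢ²(x)`. -/
noncomputable def laplacian {n : ℕ} (f : EuclideanSpace ℝ (Fin n) → ℝ)
    (x : EuclideanSpace ℝ (Fin n)) : ℝ :=
  ∑ i : Fin n,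
    fderiv ℝ (fun y => fderiv ℝ f y (EuclideanSpace.single i 1)) x (EuclideanSpace.single i 1)

open MvPolynomial Filter Topology

noncomputable section

section Algebra

variable {σ R : Type*} [CommSemiring R]

lemma totalDegree_pderiv_le (p : MvPolynomial σ R) (i : σ) :
    (pderiv i p).totalDegree ≤ p.totalDegree - 1 := by
  refine Finset.sup_le fun m hm => ?_
  have hcoeff : coeff (m + Finsupp.single i 1) p ≠ 0 := by
    rw [mem_support_iff, coeff_pderiv] at hm
    exact left_ne_zero_of_mul hm
  have := le_totalDegree (mem_support_iff.mpr hcoeff)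
  change m.degree ≤ _
  change (m + Finsupp.single i 1).degree ≤ _ at this
  rw [map_add, Finsupp.degree_single] at this
  omega

variable [Fintype σ]

variable (σ R) in
def polyLaplacian : MvPolynomial σ R →ₗ[R] MvPolynomial σ R :=
  ∑ i : σ, (pderiv i).toLinearMap ∘ₗ (pderiv i).toLinearMap

lemma polyLaplacian_apply (p : MvPolynomial σ R) :
    polyLaplacian σ R p = ∑ i, pderiv i (pderiv i p) := by
  simp [polyLaplacian]

lemma totalDegree_polyLaplacian_le (p : MvPolynomial σ R) :
    (polyLaplacian σ R p).totalDegree ≤ p.totalDegree - 2 := by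
  rw [polyLaplacian_apply]
  refine totalDegree_finsetSum_le fun i _ => ?_
  have h₁ := totalDegree_pderiv_le p i
  have h₂ := totalDegree_pderiv_le (pderiv i p) i
  omega

variable (σ R) in
def normSqPoly : MvPolynomial σ R := ∑ i, X i ^ 2

lemma pderiv_normSqPoly (i : σ) : pderiv i (normSqPoly σ R) = 2 * X i := by
  classical
  simp [normSqPoly, pderiv_X, Pi.single_apply, mul_comm]

lemma polyLaplacian_normSqPoly :
    polyLaplacian σ R (normSqPoly σ R) = 2 * Fintype.card σ := by
  have h₂ (i : σ) : pderiv i (2 : MvPolynomial σ R) = 0 := by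
    simpa using (pderiv i).map_natCast 2
  simp [polyLaplacian_apply, pderiv_normSqPoly, h₂, mul_comm]

lemma totalDegree_normSqPoly_le : (normSqPoly σ R).totalDegree ≤ 2 :=
  totalDegree_finsetSum_le fun i _ => by
    rw [X_pow_eq_monomial]
    exact (totalDegree_monomial_le _ _).trans (by simp)

end Algebra

lemma totalDegree_one_sub_normSqPoly_mul_le {σ R : Type*} [Fintype σ] [CommRing R]
    (p : MvPolynomial σ R) : ((1 - normSqPoly σ R) * p).totalDegree ≤ p.totalDegree + 2 := by
  have := (totalDegree_sub 1 (normSqPoly σ R)).trans (max_le (by simp) totalDegree_normSqPoly_le)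
  have := totalDegree_mul (1 - normSqPoly σ R) p
  omega

section PolynomialFunctions

variable {ι : Type*} [Fintype ι]

def polyFun (p : MvPolynomial ι ℝ) (x : EuclideanSpace ℝ ι) : ℝ := eval (fun i => x i) p

lemma contDiff_polyFun (p : MvPolynomial ι ℝ) {k : WithTop ℕ∞} : ContDiff ℝ k (polyFun p) :=
  (AnalyticOnNhd.eval_continuousLinearMap (𝕜 := ℝ)
    (EuclideanSpace.equiv ι ℝ).toContinuousLinearMap p).contDiff

lemma continuous_polyFun (p : MvPolynomial ι ℝ) : Continuous (polyFun p) :=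
  (contDiff_polyFun (k := 0) p).continuous

lemma hasFDerivAt_polyFun (p : MvPolynomial ι ℝ) (x : EuclideanSpace ℝ ι) :
    HasFDerivAt (polyFun p)
      (∑ i, polyFun (pderiv i p) x • EuclideanSpace.proj (𝕜 := ℝ) i) x := by
  induction p using MvPolynomial.induction_on with
  | C a => unfold polyFun; simpa using hasFDerivAt_const (𝕜 := ℝ) a x
  | add p q hp hq =>
    unfold polyFun at *
    simpa [add_smul, Finset.sum_add_distrib] using hp.fun_add hq
  | mul_X p j hp =>
    have hprod :
        polyFun (p * X j) = fun y => polyFun p y * EuclideanSpace.proj (𝕜 := ℝ) j y := by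
      ext y; simp [polyFun]
    rw [hprod]
    refine (hp.mul (EuclideanSpace.proj (𝕜 := ℝ) j).hasFDerivAt).congr_fderiv ?_
    ext v
    have hX : ∑ i, polyFun (pderiv i (X j)) x * v i = v j := by
      rw [Finset.sum_eq_single j (fun i _ hij => by simp [pderiv_X_of_ne hij.symm, polyFun])
        (by simp)]
      simp [polyFun]
    simp [polyFun] at hX ⊢
    rw [← hX, Finset.mul_sum, Finset.mul_sum, ← Finset.sum_add_distrib]
    exact Finset.sum_congr rfl fun i _ => by ring

lemma fderiv_polyFun_single [DecidableEq ι] (p : MvPolynomial ι ℝ) (x : EuclideanSpace ℝ ι)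
    (i : ι) : fderiv ℝ (polyFun p) x (EuclideanSpace.single i 1) = polyFun (pderiv i p) x := by
  simp [(hasFDerivAt_polyFun p x).fderiv]

lemma eq_zero_of_polyFun_eq_zero_on_open {p : MvPolynomial ι ℝ} {U : Set (EuclideanSpace ℝ ι)}
    (hU : IsOpen U) (hne : U.Nonempty) (h : ∀ x ∈ U, polyFun p x = 0) : p = 0 := by
  obtain ⟨x, hx⟩ := hne
  -- A sup-norm ball in `ι → ℝ` is a box with infinite sides, to which `funext_set` applies.
  have hU' : WithLp.toLp 2 ⁻¹' U ∈ 𝓝 (WithLp.ofLp x) :=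
    (PiLp.continuous_toLp 2 _).continuousAt.preimage_mem_nhds (by simpa using hU.mem_nhds hx)
  obtain ⟨r, hr, hball⟩ := Metric.mem_nhds_iff.mp hU'
  refine funext_set (fun i => Metric.ball (x i) r) (fun i => ?_) fun y hy => ?_
  · rw [Real.ball_eq_Ioo]; exact Set.Ioo_infinite (by linarith)
  · rw [map_zero]
    refine h _ (hball ?_)
    rw [ball_pi _ hr]
    exact hy

lemma polyFun_normSqPoly (x : EuclideanSpace ℝ ι) : polyFun (normSqPoly ι ℝ) x = ‖x‖ ^ 2 := by
  simp [polyFun, normSqPoly, EuclideanSpace.norm_sq_eq]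

lemma polyFun_one_sub_normSqPoly_mul (p : MvPolynomial ι ℝ) (x : EuclideanSpace ℝ ι) :
    polyFun ((1 - normSqPoly ι ℝ) * p) x = (1 - ‖x‖ ^ 2) * polyFun p x := by
  rw [← polyFun_normSqPoly]
  simp [polyFun]

end PolynomialFunctions

lemma IsLocalMax.deriv_deriv_nonpos {g : ℝ → ℝ} {t : ℝ} (h : IsLocalMax g t)
    (hc : ContinuousAt g t) : deriv (deriv g) t ≤ 0 := by
  by_contra! hpos
  -- Then `t` is also a local minimum, so `g` is locally constant.
  have hmin := isLocalMin_of_deriv_deriv_pos hpos h.deriv_eq_zero hc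
  have hconst : g =ᶠ[𝓝 t] fun _ => g t := by
    filter_upwards [h, hmin] with s hs₁ hs₂ using le_antisymm hs₁ hs₂
  have : deriv (deriv g) t = 0 := by
    rw [hconst.deriv.deriv_eq]; simp
  exact hpos.ne' this

lemma IsLocalMax.fderiv_fderiv_apply_nonpos {E : Type*} [NormedAddCommGroup E] [NormedSpace ℝ E]
    {f : E → ℝ} {x : E} (h : IsLocalMax f x) (hf : ContDiffAt ℝ 2 f x) (v : E) :
    fderiv ℝ (fun y => fderiv ℝ f y v) x v ≤ 0 := by
  set γ : ℝ → E := fun t => x + t • v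
  have hγ (t : ℝ) : HasDerivAt γ v t := by
    simpa [γ] using ((hasDerivAt_id t).smul_const v).const_add x
  have hγ0 : γ 0 = x := by simp [γ]
  have hγc : Tendsto γ (𝓝 0) (𝓝 x) := hγ0 ▸ (hγ 0).continuousAt.tendsto
  have hmax : IsLocalMax (f ∘ γ) 0 := (hγ0 ▸ h).comp_continuous (hγ 0).continuousAt
  have hderiv : deriv (f ∘ γ) =ᶠ[𝓝 0] fun t => fderiv ℝ f (γ t) v := by
    filter_upwards [hγc.eventually (hf.eventually (by simp))] with t ht
    exact ((ht.differentiableAt (by simp)).hasFDerivAt.comp_hasDerivAt t (hγ t)).deriv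
  have hφ : DifferentiableAt ℝ (fun y => fderiv ℝ f y v) x :=
    ((hf.fderiv_right (m := 1) (by norm_num)).differentiableAt (by simp)).clm_apply
      (differentiableAt_const v)
  have hchain : HasDerivAt (fun t => fderiv ℝ f (γ t) v)
      (fderiv ℝ (fun y => fderiv ℝ f y v) x v) 0 :=
    hφ.hasFDerivAt.comp_hasDerivAt_of_eq 0 (hγ 0) hγ0.symm
  rw [← hchain.deriv, ← hderiv.deriv_eq]
  exact hmax.deriv_deriv_nonpos (hf.continuousAt.comp_of_eq (hγ 0).continuousAt hγ0)

section Laplacian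

variable {n : ℕ} {f g : EuclideanSpace ℝ (Fin n) → ℝ} {x : EuclideanSpace ℝ (Fin n)}

lemma ContDiffAt.laplacian_eq_laplacian (hf : ContDiffAt ℝ 2 f x) :
    laplacian f x = Laplacian.laplacian f x := by
  rw [InnerProductSpace.laplacian_eq_iteratedFDeriv_orthonormalBasis f
    (EuclideanSpace.basisFun (Fin n) ℝ)]
  refine Finset.sum_congr rfl fun i _ => ?_
  have hd : DifferentiableAt ℝ (fderiv ℝ f) x :=
    (hf.fderiv_right (m := 1) (by norm_num)).differentiableAt (by simp)
  rw [iteratedFDeriv_two_apply, fderiv_clm_apply hd (differentiableAt_const _)]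
  simp

lemma laplacian_add (hf : ContDiffAt ℝ 2 f x) (hg : ContDiffAt ℝ 2 g x) :
    laplacian (f + g) x = laplacian f x + laplacian g x := by
  rw [hf.laplacian_eq_laplacian, hg.laplacian_eq_laplacian,
    ContDiffAt.laplacian_eq_laplacian (f := f + g) (hf.add hg), hf.laplacian_add hg]

lemma laplacian_sub (hf : ContDiffAt ℝ 2 f x) (hg : ContDiffAt ℝ 2 g x) :
    laplacian (f - g) x = laplacian f x - laplacian g x := by
  rw [hf.laplacian_eq_laplacian, hg.laplacian_eq_laplacian,
    ContDiffAt.laplacian_eq_laplacian (f := f - g) (hf.sub hg), hf.laplacian_sub hg]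

lemma laplacian_neg : laplacian (-f) x = -laplacian f x := by
  simp [laplacian, fderiv_neg]

lemma laplacian_polyFun (p : MvPolynomial (Fin n) ℝ) :
    laplacian (polyFun p) x = polyFun (polyLaplacian (Fin n) ℝ p) x := by
  simp only [laplacian, fderiv_polyFun_single, polyLaplacian_apply]
  simp [polyFun]

lemma IsLocalMax.laplacian_nonpos (h : IsLocalMax f x) (hf : ContDiffAt ℝ 2 f x) :
    laplacian f x ≤ 0 :=
  Finset.sum_nonpos fun _ _ => h.fderiv_fderiv_apply_nonpos hf _

end Laplacian

section MaximumPrinciple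

variable {n : ℕ} {Ω : Set (EuclideanSpace ℝ (Fin n))}

lemma exists_isMaxOn_frontier_of_laplacian_pos (hΩ : IsOpen Ω) (hb : Bornology.IsBounded Ω)
    (hne : Ω.Nonempty) {g : EuclideanSpace ℝ (Fin n) → ℝ} (hc : ContinuousOn g (closure Ω))
    (hg : ContDiffOn ℝ 2 g Ω) (hΔ : ∀ x ∈ Ω, 0 < laplacian g x) :
    ∃ x₀ ∈ frontier Ω, IsMaxOn g (closure Ω) x₀ := by
  obtain ⟨x₀, hx₀, hmax⟩ := hb.isCompact_closure.exists_isMaxOn hne.closure hc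
  refine ⟨x₀, hΩ.frontier_eq ▸ ⟨hx₀, fun hx₀Ω => ?_⟩, hmax⟩
  have hnhds : Ω ∈ 𝓝 x₀ := hΩ.mem_nhds hx₀Ω
  have hloc : IsLocalMax g x₀ := hmax.isLocalMax (mem_of_superset hnhds subset_closure)
  exact (hΔ x₀ hx₀Ω).not_ge (hloc.laplacian_nonpos (hg.contDiffAt hnhds))

theorem nonpos_of_laplacian_nonneg (hn : 0 < n) (hΩ : IsOpen Ω) (hb : Bornology.IsBounded Ω)
    {w : EuclideanSpace ℝ (Fin n) → ℝ} (hc : ContinuousOn w (closure Ω))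
    (hw : ContDiffOn ℝ 2 w Ω) (hΔ : ∀ x ∈ Ω, 0 ≤ laplacian w x)
    (hbd : ∀ x ∈ frontier Ω, w x ≤ 0) {x : EuclideanSpace ℝ (Fin n)} (hx : x ∈ closure Ω) :
    w x ≤ 0 := by
  obtain ⟨R, hR⟩ := hb.subset_closedBall 0
  refine le_of_forall_pos_le_add fun ε hε => ?_
  set δ := ε / (R ^ 2 + 1)
  have hδ : 0 < δ := by positivity
  set q := δ • normSqPoly (Fin n) ℝ
  have hq (y : EuclideanSpace ℝ (Fin n)) : polyFun q y = δ * ‖y‖ ^ 2 := by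
    rw [← polyFun_normSqPoly]; simp [q, polyFun]
  have hΔq (y : EuclideanSpace ℝ (Fin n)) : laplacian (polyFun q) y = δ * (2 * n) := by
    simp [laplacian_polyFun, q, polyLaplacian_normSqPoly, polyFun]
  have hΔg (y) (hy : y ∈ Ω) : 0 < laplacian (w + polyFun q) y := by
    rw [laplacian_add (hw.contDiffAt (hΩ.mem_nhds hy)) (contDiff_polyFun q).contDiffAt, hΔq]
    have : (0 : ℝ) < n := Nat.cast_pos.mpr hn
    exact add_pos_of_nonneg_of_pos (hΔ y hy) (by positivity)
  obtain ⟨x₀, hx₀, hmax⟩ := exists_isMaxOn_frontier_of_laplacian_pos hΩ hb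
    (closure_nonempty_iff.mp ⟨x, hx⟩) (hc.add (continuous_polyFun q).continuousOn)
    (hw.add (contDiff_polyFun q).contDiffOn) hΔg
  have hx₀R : ‖x₀‖ ≤ R := by
    simpa using closure_minimal hR Metric.isClosed_closedBall (frontier_subset_closure hx₀)
  have hmax' := hmax hx
  simp only [Set.mem_ofPred_eq, Pi.add_apply, hq] at hmax'
  calc w x ≤ w x₀ + δ * ‖x₀‖ ^ 2 := by linarith [mul_nonneg hδ.le (sq_nonneg ‖x‖)]
    _ ≤ δ * R ^ 2 := by
      have := mul_le_mul_of_nonneg_left (pow_le_pow_left₀ (norm_nonneg _) hx₀R 2) hδ.le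
      linarith [hbd x₀ hx₀]
    _ ≤ 0 + ε := by
      rw [zero_add, div_mul_eq_mul_div, div_le_iff₀ (by positivity)]
      nlinarith

theorem eqOn_zero_of_laplacian_eq_zero (hn : 0 < n) (hΩ : IsOpen Ω) (hb : Bornology.IsBounded Ω)
    {w : EuclideanSpace ℝ (Fin n) → ℝ} (hc : ContinuousOn w (closure Ω))
    (hw : ContDiffOn ℝ 2 w Ω) (hΔ : ∀ x ∈ Ω, laplacian w x = 0)
    (hbd : ∀ x ∈ frontier Ω, w x = 0) : Set.EqOn w 0 (closure Ω) := fun x hx =>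
  le_antisymm
    (nonpos_of_laplacian_nonneg hn hΩ hb hc hw (fun y hy => (hΔ y hy).ge)
      (fun y hy => (hbd y hy).le) hx)
    (neg_nonpos.mp (nonpos_of_laplacian_nonneg (w := -w) hn hΩ hb hc.neg hw.neg
      (fun y hy => by rw [laplacian_neg, hΔ y hy, neg_zero]) (fun y hy => by simp [hbd y hy])
      hx))

theorem eqOn_closedBall_zero_of_laplacian_eq_zero (hn : 0 < n) {c : EuclideanSpace ℝ (Fin n)}
    {r : ℝ} (hr : 0 < r) {w : EuclideanSpace ℝ (Fin n) → ℝ}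
    (hc : ContinuousOn w (Metric.closedBall c r)) (hw : ContDiffOn ℝ 2 w (Metric.ball c r))
    (hΔ : ∀ x ∈ Metric.ball c r, laplacian w x = 0) (hbd : ∀ x ∈ Metric.sphere c r, w x = 0) :
    Set.EqOn w 0 (Metric.closedBall c r) := by
  rw [← closure_ball c hr.ne'] at hc ⊢
  exact eqOn_zero_of_laplacian_eq_zero hn Metric.isOpen_ball Metric.isBounded_ball hc hw hΔ
    (frontier_ball c hr.ne' ▸ hbd)

end MaximumPrinciple

section PolynomialSolution

variable {n : ℕ}

lemma injective_polyLaplacian_comp_mulLeft (hn : 0 < n) :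
    Function.Injective
      (polyLaplacian (Fin n) ℝ ∘ₗ LinearMap.mulLeft ℝ (1 - normSqPoly (Fin n) ℝ)) := by
  refine (injective_iff_map_eq_zero _).mpr fun p hp => ?_
  rw [LinearMap.comp_apply, LinearMap.mulLeft_apply] at hp
  have hP : Set.EqOn (polyFun ((1 - normSqPoly (Fin n) ℝ) * p)) 0 (Metric.closedBall 0 1) :=
    eqOn_closedBall_zero_of_laplacian_eq_zero hn one_pos
      (continuous_polyFun _).continuousOn (contDiff_polyFun _).contDiffOn
      (fun x _ => by simp [laplacian_polyFun, hp, polyFun])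
      (fun x hx => by rw [polyFun_one_sub_normSqPoly_mul, mem_sphere_zero_iff_norm.mp hx]; ring)
  refine eq_zero_of_polyFun_eq_zero_on_open Metric.isOpen_ball ⟨0, Metric.mem_ball_self one_pos⟩
    fun x hx => ?_
  have hx1 : ‖x‖ < 1 := mem_ball_zero_iff.mp hx
  have hPx := hP (Metric.ball_subset_closedBall hx)
  rw [polyFun_one_sub_normSqPoly_mul] at hPx
  exact (mul_eq_zero.mp hPx).resolve_left (by nlinarith [norm_nonneg x])

theorem exists_polyLaplacian_one_sub_normSqPoly_mul_eq (hn : 0 < n)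
    (v : MvPolynomial (Fin n) ℝ) :
    ∃ q : MvPolynomial (Fin n) ℝ, q.totalDegree ≤ v.totalDegree ∧
      polyLaplacian (Fin n) ℝ ((1 - normSqPoly (Fin n) ℝ) * q) = v := by
  set T := polyLaplacian (Fin n) ℝ ∘ₗ LinearMap.mulLeft ℝ (1 - normSqPoly (Fin n) ℝ)
  set S := restrictTotalDegree (Fin n) ℝ v.totalDegree
  have hTS (q) (hq : q ∈ S) : T q ∈ S := by
    rw [mem_restrictTotalDegree] at hq ⊢
    have := totalDegree_polyLaplacian_le ((1 - normSqPoly (Fin n) ℝ) * q)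
    have := totalDegree_one_sub_normSqPoly_mul_le q
    simp only [T, LinearMap.comp_apply, LinearMap.mulLeft_apply]
    omega
  have hinj : Function.Injective (T.restrict hTS) := fun a b hab =>
    Subtype.ext (injective_polyLaplacian_comp_mulLeft hn (congrArg Subtype.val hab))
  obtain ⟨⟨q, hqS⟩, hq⟩ := LinearMap.injective_iff_surjective.mp hinj
    ⟨v, (mem_restrictTotalDegree _ _ _).mpr le_rfl⟩
  exact ⟨q, (mem_restrictTotalDegree _ _ _).mp hqS, congrArg Subtype.val hq⟩

end PolynomialSolution

end

/-- If `v` is a polynomial, the solution of the Dirichlet problem `Δu = v` in the open unit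
ball, `u = 0` on the unit sphere, is a polynomial of degree at most `deg v + 2`. -/
theorem dirichlet_solution_polynomial {n : ℕ} (v : MvPolynomial (Fin n) ℝ)
    (u : EuclideanSpace ℝ (Fin n) → ℝ)
    (hu_cont : ContinuousOn u (Metric.closedBall 0 1))
    (hu_smooth : ContDiffOn ℝ 2 u (Metric.ball 0 1))
    (hu_eq : ∀ x ∈ Metric.ball (0 : EuclideanSpace ℝ (Fin n)) 1,
      laplacian u x = MvPolynomial.eval (fun i => x i) v)
    (hu_bd : ∀ x : EuclideanSpace ℝ (Fin n), ‖x‖ = 1 → u x = 0) :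
    ∃ P : MvPolynomial (Fin n) ℝ, P.totalDegree ≤ v.totalDegree + 2 ∧
      ∀ x ∈ Metric.closedBall (0 : EuclideanSpace ℝ (Fin n)) 1,
        u x = MvPolynomial.eval (fun i => x i) P := by
  rcases Nat.eq_zero_or_pos n with rfl | hn
  -- `ℝ⁰` is a point and its unit sphere is empty, so `u` is an arbitrary constant.
  · refine ⟨C (u 0), by simp, fun x _ => ?_⟩
    rw [Subsingleton.elim x 0, eval_C]
  obtain ⟨q, hq_deg, hq⟩ := exists_polyLaplacian_one_sub_normSqPoly_mul_eq hn v
  set P := (1 - normSqPoly (Fin n) ℝ) * q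
  refine ⟨P, (totalDegree_one_sub_normSqPoly_mul_le q).trans (by omega), fun x hx => ?_⟩
  have hharmonic : ∀ y ∈ Metric.ball 0 1, laplacian (u - polyFun P) y = 0 := fun y hy => by
    rw [laplacian_sub (hu_smooth.contDiffAt (Metric.isOpen_ball.mem_nhds hy))
      (contDiff_polyFun P).contDiffAt, laplacian_polyFun, hq, hu_eq y hy, polyFun, sub_self]
  have hboundary : ∀ y ∈ Metric.sphere 0 1, (u - polyFun P) y = 0 := fun y hy => by
    have hy1 := mem_sphere_zero_iff_norm.mp hy
    simp [P, hu_bd y hy1, polyFun_one_sub_normSqPoly_mul, hy1]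
  exact sub_eq_zero.mp (eqOn_closedBall_zero_of_laplacian_eq_zero hn one_pos
    (hu_cont.sub (continuous_polyFun P).continuousOn)
    (hu_smooth.sub (contDiff_polyFun P).contDiffOn) hharmonic hboundary hx)
end

section
/- Let q : ℝ → ℝ be smooth with q(t) = 0 for |t| ≥ 2, and define U(r,t) = q(t−r+1) + q(t+r+1) for −1 ≤ r ≤ 1. If U is even in t (i.e., U(r,−t) = U(r,t) for all r ∈ [−1,1], t ∈ ℝ), then q^{(p)}(0) = 0 for all p ≥ 0, and consequently ∂_r^p U(±1, 0) = 0 for all p ≥ 0. -/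
open Set Filter Topology

lemma itd_zero (p : ℕ) : iteratedDeriv p (fun _ : ℝ => (0:ℝ)) = fun _ => 0 := by
  induction p with
  | zero => simp
  | succ n ih => rw [iteratedDeriv_succ, ih]; funext x; simp

lemma vanish_left (f : ℝ → ℝ) (hf : ContDiff ℝ (⊤ : ℕ∞) f) (a : ℝ)
    (h0 : ∀ x < a, f x = 0) (p : ℕ) : iteratedDeriv p f a = 0 := by
  have hio : ∀ x < a, iteratedDeriv p f x = 0 := by
    intro x hx
    have hev : f =ᶠ[𝓝 x] (fun _ => (0:ℝ)) :=
      Filter.eventuallyEq_of_mem (Iio_mem_nhds hx) (fun y hy => h0 y hy)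
    rw [hev.iteratedDeriv_eq p, itd_zero]
  have hc : ContinuousAt (iteratedDeriv p f) a :=
    (hf.continuous_iteratedDeriv p (by exact_mod_cast le_top)).continuousAt
  have h1 : Tendsto (iteratedDeriv p f) (𝓝[<] a) (𝓝 (iteratedDeriv p f a)) :=
    hc.continuousWithinAt.tendsto
  have h2 : Tendsto (iteratedDeriv p f) (𝓝[<] a) (𝓝 0) := by
    refine Tendsto.congr' ?_ tendsto_const_nhds
    exact eventually_nhdsWithin_of_forall (fun x hx => (hio x hx).symm)
  exact tendsto_nhds_unique h1 h2

lemma vanish_right (f : ℝ → ℝ) (hf : ContDiff ℝ (⊤ : ℕ∞) f) (a : ℝ)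
    (h0 : ∀ x, a < x → f x = 0) (p : ℕ) : iteratedDeriv p f a = 0 := by
  have hio : ∀ x, a < x → iteratedDeriv p f x = 0 := by
    intro x hx
    have hev : f =ᶠ[𝓝 x] (fun _ => (0:ℝ)) :=
      Filter.eventuallyEq_of_mem (Ioi_mem_nhds hx) (fun y hy => h0 y hy)
    rw [hev.iteratedDeriv_eq p, itd_zero]
  have hc : ContinuousAt (iteratedDeriv p f) a :=
    (hf.continuous_iteratedDeriv p (by exact_mod_cast le_top)).continuousAt
  have h1 : Tendsto (iteratedDeriv p f) (𝓝[>] a) (𝓝 (iteratedDeriv p f a)) :=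
    hc.continuousWithinAt.tendsto
  have h2 : Tendsto (iteratedDeriv p f) (𝓝[>] a) (𝓝 0) := by
    refine Tendsto.congr' ?_ tendsto_const_nhds
    exact eventually_nhdsWithin_of_forall (fun x hx => (hio x hx).symm)
  exact tendsto_nhds_unique h1 h2

/-- Let `q : ℝ → ℝ` be smooth with `q(t) = 0` for `|t| ≥ 2`, and
`U(r,t) = q(t−r+1) + q(t+r+1)`. If `U` is even in `t` for all `r ∈ [−1,1]`, then all
derivatives of `q` vanish at `0`, and consequently `∂_r^p U(±1,0) = 0` for all `p`. -/
theorem progressing_wave_derivatives_vanish (q : ℝ → ℝ) (hq : ContDiff ℝ (⊤ : ℕ∞) q)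
    (hsupp : ∀ t : ℝ, 2 ≤ |t| → q t = 0)
    (heven : ∀ r ∈ Set.Icc (-1 : ℝ) 1, ∀ t : ℝ,
      (q ((-t) - r + 1) + q ((-t) + r + 1)) = (q (t - r + 1) + q (t + r + 1))) :
    (∀ p : ℕ, iteratedDeriv p q 0 = 0) ∧
    (∀ p : ℕ, iteratedDeriv p (fun r : ℝ => q (0 - r + 1) + q (0 + r + 1)) 1 = 0) ∧
    (∀ p : ℕ, iteratedDeriv p (fun r : ℝ => q (0 - r + 1) + q (0 + r + 1)) (-1) = 0) := by
  -- symmetry q(u) = q(2-u)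
  have hsym : ∀ u : ℝ, q u = q (2 - u) := by
    intro u
    have h := heven 0 (by constructor <;> norm_num) (u - 1)
    have : q (2 - u) + q (2 - u) = q u + q u := by
      convert h using 3 <;> ring
    linarith
  have hzero : ∀ t ≤ (0:ℝ), q t = 0 := by
    intro t ht
    rw [hsym t]
    exact hsupp _ (by rw [abs_of_nonneg (by linarith)]; linarith)
  have hg : ContDiff ℝ (⊤ : ℕ∞) (fun r : ℝ => q (0 - r + 1) + q (0 + r + 1)) := by
    apply ContDiff.add
    · exact hq.comp (by fun_prop)
    · exact hq.comp (by fun_prop)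
  refine ⟨fun p => vanish_left q hq 0 (fun x hx => hzero x hx.le) p,
    fun p => vanish_right _ hg 1 ?_ p, fun p => vanish_left _ hg (-1) ?_ p⟩
  · intro x hx
    have h1 : q (-x + 1) = 0 := hzero _ (by linarith)
    have h2 : q (x + 1) = 0 :=
      hsupp _ (by rw [abs_of_nonneg (by linarith)]; linarith)
    simp [h1, h2]
  · intro x hx
    have h1 : q (-x + 1) = 0 :=
      hsupp _ (by rw [abs_of_nonneg (by linarith)]; linarith)
    have h2 : q (x + 1) = 0 := hzero _ (by linarith)
    simp [h1, h2]
end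

section
/- Let u_k : ℝ → ℝ solve u_k'' + λ_k² u_k = f_k with u_k = u_k' = 0 for t ≤ −T, where λ_k > 0 and f_k is smooth, even, supported in [−T, T], and its Fourier transform f̂_k vanishes at λ = ±λ_k. Then u_k is even and supported in [−T, T]. -/
open MeasureTheory

/-- If `u'' + λ² u = f` with `u = u' = 0` for `t ≤ −T`, where `f` is smooth, even,
supported in `[−T,T]`, and the Fourier transform `f̂(ξ) = ∫ f(t) e^{−iξt} dt` vanishes at
`ξ = ±λ`, then `u` is even and supported in `[−T,T]`. -/
theorem ode_solution_even_and_compactly_supported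
    (T lamk : ℝ) (hlam : 0 < lamk) (u f : ℝ → ℝ)
    (hu : ContDiff ℝ 2 u) (hf : ContDiff ℝ (⊤ : ℕ∞) f)
    (hfeven : ∀ t, f (-t) = f t)
    (hfsupp : ∀ t : ℝ, T ≤ |t| → f t = 0)
    (hode : ∀ t : ℝ, deriv (deriv u) t + lamk ^ 2 * u t = f t)
    (hinit : ∀ t : ℝ, t ≤ -T → u t = 0 ∧ deriv u t = 0)
    (hhat₁ : ∫ t : ℝ, (f t : ℂ) * Complex.exp (-(Complex.I * lamk * t)) = 0)
    (hhat₂ : ∫ t : ℝ, (f t : ℂ) * Complex.exp (-(Complex.I * (-lamk) * t)) = 0) :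
    (∀ t : ℝ, u (-t) = u t) ∧ (∀ t : ℝ, T ≤ |t| → u t = 0) := by
  -- basic differentiability facts
  have hu2 : ContDiff ℝ (1+1) u := by norm_num; exact hu
  have hud : Differentiable ℝ u := hu2.differentiable (by norm_num)
  have hu1 : ContDiff ℝ 1 (deriv u) := (contDiff_succ_iff_deriv.mp hu2).2.2
  have hud' : Differentiable ℝ (deriv u) := hu1.differentiable one_ne_zero
  have hu'at : ∀ t : ℝ, HasDerivAt u (deriv u t) t := fun t => (hud t).hasDerivAt
  have hu''at : ∀ t : ℝ, HasDerivAt (deriv u) (deriv (deriv u) t) t :=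
    fun t => (hud' t).hasDerivAt
  have hfc : Continuous f := hf.continuous
  -- compact support of f
  have hcs : HasCompactSupport f := by
    refine HasCompactSupport.intro (isCompact_Icc (a := -T) (b := T)) ?_
    intro x hx
    refine hfsupp x ?_
    rcases le_or_gt T |x| with h | h
    · exact h
    · exact absurd ⟨neg_le_of_abs_le h.le, le_of_abs_le h.le⟩ hx
  -- integrability of the complex integrands
  have hI1 : Integrable (fun t : ℝ => (f t : ℂ) * Complex.exp (-(Complex.I * lamk * t))) := by
    apply Continuous.integrable_of_hasCompactSupport
    · exact (Complex.continuous_ofReal.comp hfc).mul (Complex.continuous_exp.comp (by continuity))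
    · exact (hcs.comp_left (g := Complex.ofReal) rfl).mul_right
  have hI2 : Integrable (fun t : ℝ => (f t : ℂ) * Complex.exp (-(Complex.I * (-lamk) * t))) := by
    apply Continuous.integrable_of_hasCompactSupport
    · exact (Complex.continuous_ofReal.comp hfc).mul (Complex.continuous_exp.comp (by continuity))
    · exact (hcs.comp_left (g := Complex.ofReal) rfl).mul_right
  -- Fourier conditions in real form
  have hfcos : ∫ t : ℝ, f t * Real.cos (lamk * t) = 0 := by
    have hsum : ∫ t : ℝ, ((f t : ℂ) * Complex.exp (-(Complex.I * lamk * t))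
        + (f t : ℂ) * Complex.exp (-(Complex.I * (-lamk) * t))) = 0 := by
      rw [integral_add hI1 hI2, hhat₁, hhat₂, add_zero]
    have hkey : ∀ t : ℝ, (f t : ℂ) * Complex.exp (-(Complex.I * lamk * t))
        + (f t : ℂ) * Complex.exp (-(Complex.I * (-lamk) * t))
        = 2 * ((f t * Real.cos (lamk * t) : ℝ) : ℂ) := by
      intro t
      have h1 : (-(Complex.I * lamk * t)) = ((-(lamk * t) : ℝ) : ℂ) * Complex.I := by
        push_cast; ring
      have h2 : (-(Complex.I * (-lamk) * t) : ℂ) = ((lamk * t : ℝ) : ℂ) * Complex.I := by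
        push_cast; ring
      rw [h1, h2, Complex.exp_mul_I, Complex.exp_mul_I]
      simp [Complex.cos_neg, Complex.sin_neg, ← Complex.ofReal_mul, ← Complex.ofReal_cos, ← Complex.ofReal_sin]
      push_cast
      ring
    rw [show (fun t : ℝ => (f t : ℂ) * Complex.exp (-(Complex.I * lamk * t))
        + (f t : ℂ) * Complex.exp (-(Complex.I * (-lamk) * t)))
        = fun t : ℝ => 2 * ((f t * Real.cos (lamk * t) : ℝ) : ℂ) from funext hkey] at hsum
    have hcast : ∫ a : ℝ, ((f a * Real.cos (lamk * a) : ℝ) : ℂ)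
        = ((∫ a : ℝ, f a * Real.cos (lamk * a) : ℝ) : ℂ) := integral_ofReal
    rw [integral_const_mul, hcast] at hsum
    have := mul_eq_zero.mp hsum
    simpa using this
  have hfsin : ∫ t : ℝ, f t * Real.sin (lamk * t) = 0 := by
    have hsum : ∫ t : ℝ, ((f t : ℂ) * Complex.exp (-(Complex.I * (-lamk) * t))
        - (f t : ℂ) * Complex.exp (-(Complex.I * lamk * t))) = 0 := by
      rw [integral_sub hI2 hI1, hhat₁, hhat₂, sub_zero]
    have hkey : ∀ t : ℝ, (f t : ℂ) * Complex.exp (-(Complex.I * (-lamk) * t))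
        - (f t : ℂ) * Complex.exp (-(Complex.I * lamk * t))
        = (2 * Complex.I) * ((f t * Real.sin (lamk * t) : ℝ) : ℂ) := by
      intro t
      have h1 : (-(Complex.I * lamk * t)) = ((-(lamk * t) : ℝ) : ℂ) * Complex.I := by
        push_cast; ring
      have h2 : (-(Complex.I * (-lamk) * t) : ℂ) = ((lamk * t : ℝ) : ℂ) * Complex.I := by
        push_cast; ring
      rw [h1, h2, Complex.exp_mul_I, Complex.exp_mul_I]
      simp [Complex.cos_neg, Complex.sin_neg, ← Complex.ofReal_mul, ← Complex.ofReal_cos, ← Complex.ofReal_sin]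
      push_cast
      ring
    rw [show (fun t : ℝ => (f t : ℂ) * Complex.exp (-(Complex.I * (-lamk) * t))
        - (f t : ℂ) * Complex.exp (-(Complex.I * lamk * t)))
        = fun t : ℝ => (2 * Complex.I) * ((f t * Real.sin (lamk * t) : ℝ) : ℂ) from funext hkey] at hsum
    have hcast : ∫ a : ℝ, ((f a * Real.sin (lamk * a) : ℝ) : ℂ)
        = ((∫ a : ℝ, f a * Real.sin (lamk * a) : ℝ) : ℂ) := integral_ofReal
    rw [integral_const_mul, hcast] at hsum
    rcases mul_eq_zero.mp hsum with h | h
    · exact absurd h (by simp [Complex.I_ne_zero])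
    · simpa using h
  -- the key first-order quantities
  set P : ℝ → ℝ := fun t => deriv u t * Real.cos (lamk * t) + lamk * u t * Real.sin (lamk * t)
    with hPdef
  set Q : ℝ → ℝ := fun t => deriv u t * Real.sin (lamk * t) - lamk * u t * Real.cos (lamk * t)
    with hQdef
  have hlin : ∀ x : ℝ, HasDerivAt (fun t : ℝ => lamk * t) lamk x := by
    intro x; simpa using (hasDerivAt_id x).const_mul lamk
  have hPderiv : ∀ x : ℝ, HasDerivAt P (f x * Real.cos (lamk * x)) x := by
    intro x
    have h := ((hu''at x).mul (hlin x).cos).add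
      (((hu'at x).const_mul lamk).mul (hlin x).sin)
    refine h.congr_deriv (Eq.symm ?_)
    have hx := hode x
    linear_combination (-(Real.cos (lamk * x))) * hx
  have hQderiv : ∀ x : ℝ, HasDerivAt Q (f x * Real.sin (lamk * x)) x := by
    intro x
    have h := ((hu''at x).mul (hlin x).sin).sub
      (((hu'at x).const_mul lamk).mul (hlin x).cos)
    refine h.congr_deriv (Eq.symm ?_)
    have hx := hode x
    linear_combination (-(Real.sin (lamk * x))) * hx
  have hPinit : P (-T) = 0 := by
    obtain ⟨h1, h2⟩ := hinit (-T) le_rfl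
    simp [hPdef, h1, h2]
  have hQinit : Q (-T) = 0 := by
    obtain ⟨h1, h2⟩ := hinit (-T) le_rfl
    simp [hQdef, h1, h2]
  -- vanishing of P, Q for t ≥ T
  have hPQ : ∀ t : ℝ, T ≤ t → P t = 0 ∧ Q t = 0 := by
    intro t ht
    have hsub : ∀ g : ℝ → ℝ, Function.support (fun x => f x * g x) ⊆ Set.Ioc (-T) t := by
      intro g x hx
      have hfx : f x ≠ 0 := fun h => hx (by simp [h])
      have habs : |x| < T := by
        by_contra h
        exact hfx (hfsupp x (le_of_not_gt h))
      rw [abs_lt] at habs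
      exact ⟨habs.1, habs.2.le.trans ht⟩
    constructor
    · have hFTC : ∫ x in (-T)..t, f x * Real.cos (lamk * x) = P t - P (-T) :=
        intervalIntegral.integral_eq_sub_of_hasDerivAt (fun x _ => hPderiv x)
          ((hfc.mul (Real.continuous_cos.comp (by continuity))).intervalIntegrable _ _)
      rw [intervalIntegral.integral_eq_integral_of_support_subset (hsub _), hfcos, hPinit,
        sub_zero] at hFTC
      exact hFTC.symm
    · have hFTC : ∫ x in (-T)..t, f x * Real.sin (lamk * x) = Q t - Q (-T) :=
        intervalIntegral.integral_eq_sub_of_hasDerivAt (fun x _ => hQderiv x)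
          ((hfc.mul (Real.continuous_sin.comp (by continuity))).intervalIntegrable _ _)
      rw [intervalIntegral.integral_eq_integral_of_support_subset (hsub _), hfsin, hQinit,
        sub_zero] at hFTC
      exact hFTC.symm
  -- u and u' vanish for t ≥ T
  have huv : ∀ t : ℝ, T ≤ t → u t = 0 ∧ deriv u t = 0 := by
    intro t ht
    obtain ⟨hPt, hQt⟩ := hPQ t ht
    rw [hPdef] at hPt
    rw [hQdef] at hQt
    simp only at hPt hQt
    have hpyth : Real.sin (lamk * t) ^ 2 + Real.cos (lamk * t) ^ 2 = 1 :=
      Real.sin_sq_add_cos_sq _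
    have hu0 : lamk * u t = 0 := by
      linear_combination Real.sin (lamk * t) * hPt - Real.cos (lamk * t) * hQt
        - lamk * u t * hpyth
    have hu0' : u t = 0 := by
      rcases mul_eq_zero.mp hu0 with h | h
      · exact absurd h hlam.ne'
      · exact h
    refine ⟨hu0', ?_⟩
    linear_combination Real.cos (lamk * t) * hPt + Real.sin (lamk * t) * hQt
      - deriv u t * hpyth
  -- support statement
  have hsupport : ∀ t : ℝ, T ≤ |t| → u t = 0 := by
    intro t ht
    rcases le_abs.mp ht with h | h
    · exact (huv t h).1
    · exact (hinit t (by linarith)).1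
  refine ⟨?_, hsupport⟩
  -- evenness via energy argument
  have hneg : ∀ x : ℝ, HasDerivAt (fun t : ℝ => u (-t)) (-(deriv u (-x))) x := by
    intro x
    have h := (hu'at (-x)).comp x (hasDerivAt_neg x)
    exact h.congr_deriv (by simp)
  have hneg' : ∀ x : ℝ, HasDerivAt (fun t : ℝ => deriv u (-t)) (-(deriv (deriv u) (-x))) x := by
    intro x
    have h := (hu''at (-x)).comp x (hasDerivAt_neg x)
    exact h.congr_deriv (by simp)
  set g1 : ℝ → ℝ := fun t => u t - u (-t) with hg1def
  set g2 : ℝ → ℝ := fun t => deriv u t + deriv u (-t) with hg2def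
  have hg1 : ∀ x : ℝ, HasDerivAt g1 (g2 x) x := by
    intro x
    have h := (hu'at x).sub (hneg x)
    exact h.congr_deriv (by simp [hg2def, sub_neg_eq_add])
  have hg2 : ∀ x : ℝ, HasDerivAt g2 (-(lamk ^ 2) * g1 x) x := by
    intro x
    have h := (hu''at x).add (hneg' x)
    refine h.congr_deriv (Eq.symm ?_)
    have hx := hode x
    have hx' := hode (-x)
    rw [hfeven x] at hx'
    simp only [hg1def]
    linarith
  set E : ℝ → ℝ := fun t => g2 t ^ 2 + lamk ^ 2 * g1 t ^ 2 with hEdef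
  have hE : ∀ x : ℝ, HasDerivAt E 0 x := by
    intro x
    have h := ((hg2 x).pow 2).add (((hg1 x).pow 2).const_mul (lamk ^ 2))
    refine h.congr_deriv (Eq.symm ?_)
    push_cast
    ring
  have hEconst : ∀ x : ℝ, E x = E (-T) :=
    fun x => is_const_of_deriv_eq_zero (fun y => (hE y).differentiableAt)
      (fun y => (hE y).deriv) x (-T)
  have hEinit : E (-T) = 0 := by
    have h1 := hinit (-T) le_rfl
    have h2 := huv T le_rfl
    simp [hEdef, hg1def, hg2def, h1.1, h1.2, h2.1, h2.2]
  intro t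
  have hEt : E t = 0 := (hEconst t).trans hEinit
  rw [hEdef] at hEt
  simp only at hEt
  have hg1t : g1 t = 0 := by
    have hsq : (lamk * g1 t) ^ 2 = 0 := by
      nlinarith [sq_nonneg (g2 t), sq_nonneg (lamk * g1 t)]
    have := pow_eq_zero_iff (n := 2) (by norm_num) |>.mp hsq
    rcases mul_eq_zero.mp this with h | h
    · exact absurd h hlam.ne'
    · exact h
  rw [hg1def] at hg1t
  simp only at hg1t
  linarith
end
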